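/- Let ν be a finite complex Borel measure on ℂ with compact support and let η be a finite positive Borel measure on ℂ with compact support that is of c-linear growth for some c > 0 (i.e., η(D(λ,δ)) ≤ cδ for all λ ∈ ℂ and δ > 0) and mutually singular with |ν|. Then η(ND(ν)) = 0, where ND(ν) = {λ : limsup_{δ→0} |ν|(D(λ,δ))/δ > 0}. -/

import Mathlib

open MeasureTheory Filter Metric Set Complex Topology

noncomputable section

/-- The analytic capacity of a compact set `B ⊆ ℂ`: the supremum of `|f'(∞)|` over functions
`f` analytic on `(ℂ ∪ {∞}) \ B` bounded by `1` there, where `f(∞) = lim_{z→∞} f(z)` and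
`f'(∞) = lim_{z→∞} z (f(z) - f(∞))`. -/
def capCompact (B : Set ℂ) : ℝ :=
  sSup {r : ℝ | ∃ (f : ℂ → ℂ) (c d : ℂ),
    DifferentiableOn ℂ f Bᶜ ∧ (∀ z ∈ Bᶜ, ‖f z‖ ≤ 1) ∧
    Tendsto f (Bornology.cobounded ℂ) (𝓝 c) ∧
    Tendsto (fun z => z * (f z - c)) (Bornology.cobounded ℂ) (𝓝 d) ∧
    r = ‖d‖}

/-- The analytic capacity of an arbitrary set `E ⊆ ℂ`. -/
def anCap (E : Set ℂ) : ℝ :=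
  sSup {r : ℝ | ∃ B : Set ℂ, IsCompact B ∧ B ⊆ E ∧ r = capCompact B}

/-- The truncated Cauchy transform `C_ε(g·σ)(z) = ∫_{|w-z|>ε} (w-z)⁻¹ g(w) dσ(w)`. -/
def truncCT (σ : Measure ℂ) (g : ℂ → ℂ) (ε : ℝ) (z : ℂ) : ℂ :=
  ∫ w in {w : ℂ | ε < dist w z}, (w - z)⁻¹ * g w ∂σ

/-- The principal value Cauchy transform of `g·σ` exists at `z` with value `L`. -/
def CTTendsto (σ : Measure ℂ) (g : ℂ → ℂ) (z L : ℂ) : Prop :=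
  Tendsto (fun ε => truncCT σ g ε z) (𝓝[>] (0 : ℝ)) (𝓝 L)

/-- The principal value Cauchy transform of `g·σ` exists at `z`. -/
def CTExists (σ : Measure ℂ) (g : ℂ → ℂ) (z : ℂ) : Prop := ∃ L, CTTendsto σ g z L

/-- The principal value Cauchy transform `C(g·σ)(z)` (junk value where the limit fails). -/
def cauchyPV (σ : Measure ℂ) (g : ℂ → ℂ) (z : ℂ) : ℂ :=
  limUnder (𝓝[>] (0 : ℝ)) (fun ε => truncCT σ g ε z)

/-- The total-variation measure of the complex measure `g·σ`. -/
def varM (σ : Measure ℂ) (g : ℂ → ℂ) : Measure ℂ :=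
  σ.withDensity fun w => (‖g w‖₊ : ENNReal)

/-- The zero linear density set of a positive measure. -/
def ZDset (τ : Measure ℂ) : Set ℂ :=
  {p : ℂ | Tendsto (fun δ => τ (ball p δ) / ENNReal.ofReal δ) (𝓝[>] (0 : ℝ)) (𝓝 0)}

/-- The non-zero linear density set of a positive measure. -/
def NDset (τ : Measure ℂ) : Set ℂ :=
  {p : ℂ | 0 < Filter.limsup (fun δ => τ (ball p δ) / ENNReal.ofReal δ) (𝓝[>] (0 : ℝ))}

/-- The (closed) support of a positive Borel measure on `ℂ`. -/
def msupport (η : Measure ℂ) : Set ℂ := {x : ℂ | ∀ δ > 0, 0 < η (ball x δ)}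

/-- Rational functions with poles off `K`. -/
def RatOn (K : Set ℂ) : Set (ℂ → ℂ) :=
  {f | ∃ p q : Polynomial ℂ, (∀ z ∈ K, q.eval z ≠ 0) ∧ f = fun z => p.eval z / q.eval z}

/-- Membership in `R^t(K,μ)`, the closure of `Rat(K)` in `L^t(μ)`. -/
def MemRt (K : Set ℂ) (μ : Measure ℂ) (t : ℝ) (f : ℂ → ℂ) : Prop :=
  MemLp f (ENNReal.ofReal t) μ ∧
  ∀ ε > 0, ∃ r ∈ RatOn K, eLpNorm (fun z => r z - f z) (ENNReal.ofReal t) μ < ENNReal.ofReal ε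

/-- `g ⊥ R^t(K,μ)`: `g ∈ L^s(μ)` annihilates all rational functions with poles off `K`. -/
def Annih (K : Set ℂ) (μ : Measure ℂ) (s : ℝ) (g : ℂ → ℂ) : Prop :=
  MemLp g (ENNReal.ofReal s) μ ∧ ∀ r ∈ RatOn K, ∫ z, r z * g z ∂μ = 0

/-- Purity of `S_μ` on `R^t(K,μ)`: no nontrivial direct `L^t` summand. -/
def PureSμ (K : Set ℂ) (μ : Measure ℂ) (t : ℝ) : Prop :=
  ¬ ∃ Δ : Set ℂ, MeasurableSet Δ ∧ 0 < μ Δ ∧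
    ∀ f : ℂ → ℂ, MemLp f (ENNReal.ofReal t) μ → MemRt K μ t (Δ.indicator f)

/-- The rotated Lipschitz graph with rotation angle `βn` of `An : ℝ → ℝ`. -/
def rotGraph (βn : ℝ) (An : ℝ → ℝ) : Set ℂ :=
  Set.range fun x : ℝ => Complex.exp (βn * Complex.I) * ((x : ℂ) + (An x : ℂ) * Complex.I)

/-- The density `L(z)` on the graph of a Lipschitz function `A`. -/
def Lfn (An : ℝ → ℝ) (w : ℂ) : ℂ :=
  (1 + Complex.ofReal (deriv An w.re) * Complex.I) /
    (2 * (Real.pi : ℂ) * Complex.I * Complex.ofReal (Real.sqrt (1 + (deriv An w.re) ^ 2)))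

/-- The `∂̄`-operator. -/
def dbar (φ : ℂ → ℂ) (z : ℂ) : ℂ :=
  (fderiv ℝ φ z 1 + Complex.I * fderiv ℝ φ z Complex.I) / 2

/-!
By the Besicovitch differentiation theorem, `τ (B̄(p, r)) / η (B̄(p, r))` tends to the
Radon–Nikodym derivative `dτ/dη (p)` for `η`-a.e. `p`, and this derivative vanishes `η`-a.e. because
`τ = |ν|` and `η` are mutually singular. Since `η (B̄(p, δ)) ≤ 2cδ`, the ratio `τ (B(p, δ)) / δ` is
at most `2c` times the first one, so `|ν|` has zero linear density at `η`-a.e. point.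
-/

section LinearDensity

variable {α : Type*} [PseudoMetricSpace α] [MeasurableSpace α]

theorem measure_ball_div_le_of_linear_growth {τ η : Measure α} {c δ : ℝ} {p : α} (hδ : 0 < δ)
    (hgrowth : η (ball p (2 * δ)) ≤ ENNReal.ofReal (c * (2 * δ)))
    (hfin : τ (closedBall p δ) / η (closedBall p δ) ≠ ⊤) :
    τ (ball p δ) / ENNReal.ofReal δ ≤
      τ (closedBall p δ) / η (closedBall p δ) * ENNReal.ofReal (2 * c) := by
  set ratio := τ (closedBall p δ) / η (closedBall p δ)
  have hη : η (closedBall p δ) ≤ ENNReal.ofReal (2 * c) * ENNReal.ofReal δ :=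
    calc η (closedBall p δ) ≤ η (ball p (2 * δ)) :=
          measure_mono (closedBall_subset_ball (by linarith))
      _ ≤ ENNReal.ofReal (c * (2 * δ)) := hgrowth
      _ = ENNReal.ofReal (2 * c) * ENNReal.ofReal δ := by
          rw [← ENNReal.ofReal_mul' hδ.le]; ring_nf
  have hηtop : η (closedBall p δ) ≠ ⊤ :=
    ne_top_of_le_ne_top (ENNReal.mul_ne_top ENNReal.ofReal_ne_top ENNReal.ofReal_ne_top) hη
  refine ENNReal.div_le_of_le_mul ?_
  calc τ (ball p δ) ≤ τ (closedBall p δ) := measure_mono ball_subset_closedBall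
    _ ≤ ratio * η (closedBall p δ) :=
        (ENNReal.div_le_iff_le_mul (Or.inr hfin) (Or.inl hηtop)).1 le_rfl
    _ ≤ ratio * (ENNReal.ofReal (2 * c) * ENNReal.ofReal δ) := by gcongr
    _ = ratio * ENNReal.ofReal (2 * c) * ENNReal.ofReal δ := (mul_assoc _ _ _).symm

theorem tendsto_measure_ball_div_of_tendsto_measure_div {τ η : Measure α} {c : ℝ} {p : α}
    (hgrowth : ∀ δ > 0, η (ball p δ) ≤ ENNReal.ofReal (c * δ))
    (hratio : Tendsto (fun r => τ (closedBall p r) / η (closedBall p r)) (𝓝[>] 0) (𝓝 0)) :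
    Tendsto (fun δ => τ (ball p δ) / ENNReal.ofReal δ) (𝓝[>] 0) (𝓝 0) := by
  have hbound : Tendsto (fun r => τ (closedBall p r) / η (closedBall p r) * ENNReal.ofReal (2 * c))
      (𝓝[>] 0) (𝓝 0) := by
    simpa only [zero_mul] using ENNReal.Tendsto.mul_const hratio (Or.inr ENNReal.ofReal_ne_top)
  have hfin : ∀ᶠ r in 𝓝[>] (0 : ℝ), τ (closedBall p r) / η (closedBall p r) ≠ ⊤ :=
    hratio.eventually_ne ENNReal.zero_ne_top
  refine tendsto_of_tendsto_of_tendsto_of_le_of_le' tendsto_const_nhds hbound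
    (Eventually.of_forall fun _ => zero_le) ?_
  filter_upwards [hfin, self_mem_nhdsWithin] with δ hδfin hδ
  exact measure_ball_div_le_of_linear_growth hδ (hgrowth _ (by simpa using hδ)) hδfin

end LinearDensity

theorem ae_tendsto_measure_ball_div_of_mutuallySingular {β : Type*} [MetricSpace β]
    [MeasurableSpace β] [BorelSpace β] [SecondCountableTopology β] [HasBesicovitchCovering β]
    {τ η : Measure β} [IsLocallyFiniteMeasure τ] [IsLocallyFiniteMeasure η] {c : ℝ}
    (hgrowth : ∀ p : β, ∀ δ > 0, η (ball p δ) ≤ ENNReal.ofReal (c * δ)) (hsing : τ ⟂ₘ η) :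
    ∀ᵐ p ∂η, Tendsto (fun δ => τ (ball p δ) / ENNReal.ofReal δ) (𝓝[>] 0) (𝓝 0) := by
  filter_upwards [hsing.rnDeriv_ae_eq_zero, Besicovitch.ae_tendsto_rnDeriv τ η]
    with p hzero hratio
  rw [hzero] at hratio
  exact tendsto_measure_ball_div_of_tendsto_measure_div (hgrowth p) hratio

theorem notMem_NDset_of_mem_ZDset {τ : Measure ℂ} {p : ℂ} (hp : p ∈ ZDset τ) :
    p ∉ NDset τ := by
  simp [NDset, hp.limsup_eq]

theorem isFiniteMeasure_varM {σ : Measure ℂ} {g : ℂ → ℂ} (hg : Integrable g σ) :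
    IsFiniteMeasure (varM σ g) :=
  isFiniteMeasure_withDensity hg.2.ne

theorem stmt7_general (σ : Measure ℂ)
    (g : ℂ → ℂ) (hg : Integrable g σ)
    (η : Measure ℂ) [IsFiniteMeasure η]
    (c : ℝ)
    (hgrowth : ∀ p : ℂ, ∀ δ > 0, η (ball p δ) ≤ ENNReal.ofReal (c * δ))
    (hsing : Measure.MutuallySingular η (varM σ g)) :
    η (NDset (varM σ g)) = 0 := by
  have := isFiniteMeasure_varM hg
  rw [measure_eq_zero_iff_ae_notMem]
  filter_upwards [ae_tendsto_measure_ball_div_of_mutuallySingular hgrowth hsing.symm]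
    with p hp using notMem_NDset_of_mem_ZDset hp

theorem stmt7 (σ : Measure ℂ) [IsFiniteMeasure σ]
    (hsupp : ∃ B : Set ℂ, IsCompact B ∧ σ Bᶜ = 0)
    (g : ℂ → ℂ) (hg : Integrable g σ)
    (η : Measure ℂ) [IsFiniteMeasure η]
    (hηsupp : ∃ B : Set ℂ, IsCompact B ∧ η Bᶜ = 0)
    (c : ℝ) (hc : 0 < c)
    (hgrowth : ∀ p : ℂ, ∀ δ > 0, η (ball p δ) ≤ ENNReal.ofReal (c * δ))
    (hsing : Measure.MutuallySingular η (varM σ g)) :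
    η (NDset (varM σ g)) = 0 :=
  stmt7_general σ g hg η c hgrowth hsing

end
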